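/- Let L ≥ 0 and let C : [0,L] → ℝ be continuous. Then: (i) for all s, t ∈ [0,L], d_C(s,t) ≤ 2·(sup{C(r) : min(s,t) ≤ r ≤ max(s,t)} − inf{C(r) : min(s,t) ≤ r ≤ max(s,t)}); (ii) the identity map from [0,L] with the Euclidean metric to [0,L] equipped with the pseudometric d_C is uniformly continuous; and (iii) the metric space obtained from the pseudometric space ([0,L], d_C) by identifying points at d_C-distance zero is a compact metric space. -/
import Mathlib

open Set

section Aux

variable {L : ℝ} {C : ℝ → ℝ}

/-- A type synonym for `[0,L]` to carry the contour pseudometric. -/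
def ContourSpace (L : ℝ) : Type := Set.Icc (0:ℝ) L

/-- coercion to ℝ -/
def ContourSpace.toReal {L : ℝ} (x : ContourSpace L) : ℝ :=
  (show Set.Icc (0:ℝ) L from x).1

lemma ContourSpace.toReal_mem {L : ℝ} (x : ContourSpace L) :
    x.toReal ∈ Set.Icc (0:ℝ) L := (show Set.Icc (0:ℝ) L from x).2

lemma contour_min_point (hC : ContinuousOn C (Set.Icc 0 L))
    {s t : ℝ} (hs : s ∈ Set.Icc (0:ℝ) L) (ht : t ∈ Set.Icc (0:ℝ) L) :
    ∃ r ∈ Set.uIcc s t, sInf (C '' Set.uIcc s t) = C r ∧ ∀ y ∈ Set.uIcc s t, C r ≤ C y :=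
  isCompact_uIcc.exists_sInf_image_eq_and_le Set.nonempty_uIcc
    (hC.mono (Set.uIcc_subset_Icc hs ht))

lemma contour_bddBelow (hC : ContinuousOn C (Set.Icc 0 L))
    {s t : ℝ} (hs : s ∈ Set.Icc (0:ℝ) L) (ht : t ∈ Set.Icc (0:ℝ) L) :
    BddBelow (C '' Set.uIcc s t) :=
  isCompact_uIcc.bddBelow_image (hC.mono (Set.uIcc_subset_Icc hs ht))

lemma contour_triangle (hC : ContinuousOn C (Set.Icc 0 L))
    {d : ℝ → ℝ → ℝ}
    (hd : ∀ s t : ℝ, d s t = C s + C t - 2 * sInf (C '' Set.uIcc s t))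
    {s t u : ℝ} (hs : s ∈ Set.Icc (0:ℝ) L) (ht : t ∈ Set.Icc (0:ℝ) L)
    (hu : u ∈ Set.Icc (0:ℝ) L) : d s u ≤ d s t + d t u := by
  obtain ⟨r, hr, hre, -⟩ := contour_min_point hC hs hu
  have h1 : sInf (C '' Set.uIcc s t) ≤ C t :=
    csInf_le (contour_bddBelow hC hs ht) ⟨t, Set.right_mem_uIcc, rfl⟩
  have h2 : sInf (C '' Set.uIcc t u) ≤ C t :=
    csInf_le (contour_bddBelow hC ht hu) ⟨t, Set.left_mem_uIcc, rfl⟩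
  rcases Set.uIcc_subset_uIcc_union_uIcc (b := t) hr with h | h
  · have h3 : sInf (C '' Set.uIcc s t) ≤ C r :=
      csInf_le (contour_bddBelow hC hs ht) ⟨r, h, rfl⟩
    rw [hd, hd, hd]; linarith
  · have h3 : sInf (C '' Set.uIcc t u) ≤ C r :=
      csInf_le (contour_bddBelow hC ht hu) ⟨r, h, rfl⟩
    rw [hd, hd, hd]; linarith

end Aux

/-- For a continuous contour function `C` on `[0, L]`:
(i) `d_C(s,t)` is bounded by twice the oscillation of `C` on `[min s t, max s t]`;
(ii) the identity map from `[0,L]` with the Euclidean metric to `([0,L], d_C)` is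
uniformly continuous;
(iii) the quotient metric space obtained by identifying points at `d_C`-distance zero
is a compact metric space (formalized as: there is a compact metric space `X`
and a surjection `q : [0,L] → X` with `dist (q s) (q t) = d_C s t`). -/
theorem contour_pseudometric_uniformly_continuous_compact_quotient
    (L : ℝ) (hL : 0 ≤ L) (C : ℝ → ℝ) (hC : ContinuousOn C (Set.Icc 0 L))
    (d : ℝ → ℝ → ℝ)
    (hd : ∀ s t : ℝ, d s t = C s + C t - 2 * sInf (C '' Set.uIcc s t)) :
    (∀ s ∈ Set.Icc (0:ℝ) L, ∀ t ∈ Set.Icc (0:ℝ) L,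
        d s t ≤ 2 * (sSup (C '' Set.uIcc s t) - sInf (C '' Set.uIcc s t))) ∧
    (∀ ε > (0:ℝ), ∃ δ > (0:ℝ), ∀ s ∈ Set.Icc (0:ℝ) L, ∀ t ∈ Set.Icc (0:ℝ) L,
        |s - t| < δ → d s t < ε) ∧
    (∃ (X : Type) (_ : MetricSpace X), CompactSpace X ∧
        ∃ q : Set.Icc (0:ℝ) L → X, Function.Surjective q ∧
          ∀ s t : Set.Icc (0:ℝ) L, dist (q s) (q t) = d (s : ℝ) (t : ℝ)) := by
  -- Part (i)
  have part1 : ∀ s ∈ Set.Icc (0:ℝ) L, ∀ t ∈ Set.Icc (0:ℝ) L,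
      d s t ≤ 2 * (sSup (C '' Set.uIcc s t) - sInf (C '' Set.uIcc s t)) := by
    intro s hs t ht
    have hbA : BddAbove (C '' Set.uIcc s t) :=
      isCompact_uIcc.bddAbove_image (hC.mono (Set.uIcc_subset_Icc hs ht))
    have hsS : C s ≤ sSup (C '' Set.uIcc s t) :=
      le_csSup hbA ⟨s, Set.left_mem_uIcc, rfl⟩
    have htS : C t ≤ sSup (C '' Set.uIcc s t) :=
      le_csSup hbA ⟨t, Set.right_mem_uIcc, rfl⟩
    rw [hd]; linarith
  -- Part (ii)
  have part2 : ∀ ε > (0:ℝ), ∃ δ > (0:ℝ), ∀ s ∈ Set.Icc (0:ℝ) L, ∀ t ∈ Set.Icc (0:ℝ) L,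
      |s - t| < δ → d s t < ε := by
    intro ε hε
    have hu : UniformContinuousOn C (Set.Icc 0 L) :=
      isCompact_Icc.uniformContinuousOn_of_continuous hC
    rw [Metric.uniformContinuousOn_iff] at hu
    obtain ⟨δ, hδ, hδ'⟩ := hu (ε / 2) (by linarith)
    refine ⟨δ, hδ, fun s hs t ht hst => ?_⟩
    obtain ⟨r, hr, hre, -⟩ := contour_min_point hC hs ht
    have hrL : r ∈ Set.Icc (0:ℝ) L := Set.uIcc_subset_Icc hs ht hr
    have hsr : |s - r| < δ := by
      rcases Set.mem_uIcc.mp hr with ⟨h1, h2⟩ | ⟨h1, h2⟩ <;>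
        rw [abs_sub_lt_iff] at hst ⊢ <;> constructor <;> linarith [hst.1, hst.2]
    have htr : |t - r| < δ := by
      rcases Set.mem_uIcc.mp hr with ⟨h1, h2⟩ | ⟨h1, h2⟩ <;>
        rw [abs_sub_lt_iff] at hst ⊢ <;> constructor <;> linarith [hst.1, hst.2]
    have e1 : |C s - C r| < ε / 2 := by
      have := hδ' s hs r hrL (by rwa [Real.dist_eq]); rwa [Real.dist_eq] at this
    have e2 : |C t - C r| < ε / 2 := by
      have := hδ' t ht r hrL (by rwa [Real.dist_eq]); rwa [Real.dist_eq] at this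
    rw [abs_lt] at e1 e2
    rw [hd, hre]; linarith [e1.2, e2.2]
  refine ⟨part1, part2, ?_⟩
  -- Part (iii)
  letI inst : PseudoMetricSpace (ContourSpace L) :=
    { dist := fun x y => d x.toReal y.toReal
      dist_self := fun x => by
        simp [hd, Set.uIcc_self, Set.image_singleton]; ring
      dist_comm := fun x y => by
        simp only [hd, Set.uIcc_comm x.toReal y.toReal]; ring
      dist_triangle := fun x y z =>
        contour_triangle hC hd x.toReal_mem y.toReal_mem z.toReal_mem }
  haveI : CompactSpace (ContourSpace L) := by
    have hcont : Continuous (fun x : Set.Icc (0:ℝ) L => (show ContourSpace L from x)) := by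
      rw [Metric.continuous_iff]
      intro b ε hε
      obtain ⟨δ, hδ, h⟩ := part2 ε hε
      exact ⟨δ, hδ, fun a ha => h a.1 a.2 b.1 b.2 (by
        rwa [Subtype.dist_eq, Real.dist_eq] at ha)⟩
    constructor
    have : Set.univ = Set.range (fun x : Set.Icc (0:ℝ) L => (show ContourSpace L from x)) := by
      exact (Set.range_eq_univ.mpr (fun x => ⟨x, rfl⟩)).symm
    rw [this]
    exact isCompact_range hcont
  refine ⟨SeparationQuotient (ContourSpace L), inferInstance, ?_, ?_⟩
  · constructor
    have : (Set.univ : Set (SeparationQuotient (ContourSpace L))) =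
        Set.range SeparationQuotient.mk := by
      ext x; simp [SeparationQuotient.surjective_mk.range_eq]
    rw [this]
    exact isCompact_range SeparationQuotient.continuous_mk
  · refine ⟨fun x => SeparationQuotient.mk (show ContourSpace L from x), ?_, ?_⟩
    · intro y
      obtain ⟨x, rfl⟩ := SeparationQuotient.surjective_mk y
      exact ⟨x, rfl⟩
    · intro s t
      rw [SeparationQuotient.dist_mk]
      rfl
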